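/- Let n ≥ 2. For I, J ∈ P_n^D, the set {K ∈ P_n^D : I ≤ K and J ≤ K} has a least element, defining a product I ·_D J on P_n^D. With this product there is a bijection F from the monoid presented by generators e_{i,j} (i < j in [±n], j ≠ −i) subject to the relations (PD1) e_{i,j}·e_{i,j} = e_{i,j}; (PD2) e_{i,j}·e_{r,s} = e_{r,s}·e_{i,j}; (PD3) e_{i,j}·e_{j,k} = e_{i,j}·e_{i,k} = e_{i,k}·e_{j,k} for i < j < k in [±n] with j ≠ −i and k ≠ −j; (PD4) e_{i,j} = e_{−j,−i}; (PD5) e_{−i,j}·e_{i,j}·e_{−r,s}·e_{r,s} = e_{−a,b}·e_{a,b}·e_{b,c}·e_{c,d} whenever i < j, r < s, and a < b < c < d are positive with {i, j, r, s} = {a, b, c, d} as sets, onto P_n^D, such that F maps the identity to ⊥, F maps the class of e_{i,j} to ε_{i,j}, and F(x·y) = F(x) ·_D F(y) for all x, y. -/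

import Mathlib

instance setoidCommMonoid (α : Type*) : CommMonoid (Setoid α) where
  mul := (· ⊔ ·)
  one := ⊥
  mul_assoc := sup_assoc
  one_mul := bot_sup_eq
  mul_one := sup_bot_eq
  mul_comm := sup_comm

def muSet {α : Type*} (X : Set α) : Setoid α :=
  Relation.EqvGen.setoid (fun x y => x ∈ X ∧ y ∈ X)

def mu {α : Type*} (i j : α) : Setoid α := muSet {i, j}

/-- `[±n]`: nonzero integers of absolute value at most `n`, with the order from `ℤ`. -/
abbrev PM (n : ℕ) := {k : ℤ // k ≠ 0 ∧ |k| ≤ (n : ℤ)}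

namespace PM

/-- The negation involution `k ↦ -k` on `[±n]`. -/
def neg {n : ℕ} (x : PM n) : PM n :=
  ⟨-x.1, by obtain ⟨h1, h2⟩ := x.2; exact ⟨neg_ne_zero.mpr h1, by rwa [abs_neg]⟩⟩

@[simp] theorem neg_neg {n : ℕ} (x : PM n) : x.neg.neg = x := Subtype.ext (by simp [neg])

theorem neg_lt_neg {n : ℕ} {x y : PM n} (h : x < y) : y.neg < x.neg := by
  have h' : x.1 < y.1 := Subtype.coe_lt_coe.mpr h
  rw [← Subtype.coe_lt_coe]
  show -y.1 < -x.1
  omega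

theorem neg_lt_pos {n : ℕ} {x y : PM n} (hx : 0 < x.1) (hy : 0 < y.1) : x.neg < y := by
  rw [← Subtype.coe_lt_coe]
  show -x.1 < y.1
  omega

theorem pos_ne_neg {n : ℕ} {x y : PM n} (hx : 0 < x.1) (hy : 0 < y.1) : y ≠ x.neg := by
  intro h
  have : y.1 = -x.1 := congrArg Subtype.val h
  omega

theorem neg_lt_self {n : ℕ} {x : PM n} (hx : 0 < x.1) : x.neg < x := neg_lt_pos hx hx

/-- The absolute value map `x ↦ |x|` from `[±n]` to its positive part. -/
def abs {n : ℕ} (x : PM n) : PM n :=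
  ⟨|x.1|, by obtain ⟨h1, h2⟩ := x.2; exact ⟨abs_ne_zero.mpr h1, by rwa [abs_abs]⟩⟩

end PM

/-- Image of a subset of `[±n]` under negation. -/
def negSet {n : ℕ} (K : Set (PM n)) : Set (PM n) := PM.neg '' K

/-- The partition `I⁻` transported along negation: `x ∼ y` in `negPart I` iff `-x ∼ -y` in `I`. -/
def negPart {n : ℕ} (I : Setoid (PM n)) : Setoid (PM n) := Setoid.comap PM.neg I

/-- A set partition `I` of `[±n]` is *signed* if for every block `K` of `I` the set `-K` is
also a block; equivalently, `x ∼ y ↔ -x ∼ -y` for all `x, y`. -/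
def IsSigned {n : ℕ} (I : Setoid (PM n)) : Prop :=
  ∀ x y : PM n, I x y ↔ I (PM.neg x) (PM.neg y)

/-- A *zero block* of a partition `I` is a block `K` with `-K = K`. -/
def IsZeroBlock {n : ℕ} (I : Setoid (PM n)) (K : Set (PM n)) : Prop :=
  K ∈ I.classes ∧ negSet K = K

/-- A `Bₙ`-partition: a signed partition of `[±n]` with at most one zero block. -/
def IsBPart {n : ℕ} (I : Setoid (PM n)) : Prop :=
  IsSigned I ∧ Set.Subsingleton {K | IsZeroBlock I K}

/-- A *restricted* signed partition: all its zero blocks have more than two elements. -/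
def IsRestricted {n : ℕ} (I : Setoid (PM n)) : Prop :=
  IsSigned I ∧ ∀ K : Set (PM n), IsZeroBlock I K → 2 < K.ncard

/-- A `Dₙ`-partition: a `Bₙ`-partition whose zero block (if present) has more than two
elements. -/
def IsDPart {n : ℕ} (I : Setoid (PM n)) : Prop :=
  IsBPart I ∧ ∀ K : Set (PM n), IsZeroBlock I K → 2 < K.ncard

/-- For `i < j` in `[±n]`, the signed partition `ε_{i,j} = μ_{-j,-i} ⊔ μ_{i,j}`. -/
def eps {n : ℕ} (i j : PM n) : Setoid (PM n) := mu (PM.neg j) (PM.neg i) ⊔ mu i j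

theorem PM.neg_injective {n : ℕ} : Function.Injective (PM.neg : PM n → PM n) :=
  Function.LeftInverse.injective PM.neg_neg

theorem PM.neg_ne_neg_neg {n : ℕ} {i j : PM n} (hji : j ≠ PM.neg i) :
    PM.neg i ≠ PM.neg (PM.neg j) := by
  intro h
  apply hji
  rw [PM.neg_injective h, PM.neg_neg]

/-- Generators `e_{i,j}` for `i < j` in `[±n]` with `j ≠ -i`. -/
abbrev DGen (n : ℕ) := {p : PM n × PM n // p.1 < p.2 ∧ p.2 ≠ PM.neg p.1}

open FreeMonoid in
/-- The defining relations (PD1)–(PD5) of the monoid of `Dₙ`-partitions. -/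
inductive DRel (n : ℕ) : FreeMonoid (DGen n) → FreeMonoid (DGen n) → Prop
  /-- (PD1) `e_{i,j} e_{i,j} = e_{i,j}`. -/
  | PD1 (a : DGen n) : DRel n (of a * of a) (of a)
  /-- (PD2) `e_{i,j} e_{r,s} = e_{r,s} e_{i,j}`. -/
  | PD2 (a b : DGen n) : DRel n (of a * of b) (of b * of a)
  /-- (PD3), first equality: `e_{i,j} e_{j,k} = e_{i,j} e_{i,k}` for `i < j < k`,
  `j ≠ -i`, `k ≠ -j` (and `k ≠ -i`, so that `e_{i,k}` is a generator). -/
  | PD3a (i j k : PM n) (hij : i < j) (hjk : j < k)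
      (hji : j ≠ PM.neg i) (hkj : k ≠ PM.neg j) (hki : k ≠ PM.neg i) :
      DRel n (of ⟨(i, j), hij, hji⟩ * of ⟨(j, k), hjk, hkj⟩)
        (of ⟨(i, j), hij, hji⟩ * of ⟨(i, k), hij.trans hjk, hki⟩)
  /-- (PD3), second equality: `e_{i,j} e_{j,k} = e_{i,k} e_{j,k}` for `i < j < k`,
  `j ≠ -i`, `k ≠ -j` (and `k ≠ -i`). -/
  | PD3b (i j k : PM n) (hij : i < j) (hjk : j < k)
      (hji : j ≠ PM.neg i) (hkj : k ≠ PM.neg j) (hki : k ≠ PM.neg i) :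
      DRel n (of ⟨(i, j), hij, hji⟩ * of ⟨(j, k), hjk, hkj⟩)
        (of ⟨(i, k), hij.trans hjk, hki⟩ * of ⟨(j, k), hjk, hkj⟩)
  /-- (PD4) `e_{i,j} = e_{-j,-i}`. -/
  | PD4 (i j : PM n) (hij : i < j) (hji : j ≠ PM.neg i) :
      DRel n (of ⟨(i, j), hij, hji⟩)
        (of ⟨(PM.neg j, PM.neg i), PM.neg_lt_neg hij, PM.neg_ne_neg_neg hji⟩)
  /-- (PD5) `e_{-i,j} e_{i,j} e_{-r,s} e_{r,s} = e_{-a,b} e_{a,b} e_{b,c} e_{c,d}`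
  whenever `i < j`, `r < s` and `a < b < c < d` are positive with
  `{i, j, r, s} = {a, b, c, d}`. -/
  | PD5 (i j r s a b c d : PM n)
      (hi : 0 < i.1) (hj : 0 < j.1) (hr : 0 < r.1) (hs : 0 < s.1)
      (ha : 0 < a.1) (hb : 0 < b.1) (hc : 0 < c.1) (hd : 0 < d.1)
      (hij : i < j) (hrs : r < s) (hab : a < b) (hbc : b < c) (hcd : c < d)
      (hset : ({i, j, r, s} : Set (PM n)) = {a, b, c, d}) :
      DRel n
        (of ⟨(PM.neg i, j), PM.neg_lt_pos hi hj,
            by rw [PM.neg_neg]; exact hij.ne'⟩ *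
          of ⟨(i, j), hij, PM.pos_ne_neg hi hj⟩ *
          of ⟨(PM.neg r, s), PM.neg_lt_pos hr hs,
            by rw [PM.neg_neg]; exact hrs.ne'⟩ *
          of ⟨(r, s), hrs, PM.pos_ne_neg hr hs⟩)
        (of ⟨(PM.neg a, b), PM.neg_lt_pos ha hb,
            by rw [PM.neg_neg]; exact hab.ne'⟩ *
          of ⟨(a, b), hab, PM.pos_ne_neg ha hb⟩ *
          of ⟨(b, c), hbc, PM.pos_ne_neg hb hc⟩ *
          of ⟨(c, d), hcd, PM.pos_ne_neg hc hd⟩)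

/-!
The least common `Dₙ`-coarsening of two `Dₙ`-partitions is their join with all zero blocks
merged: a zero block `{x, -x}` of the join would already be a block of one of the two, and
those are larger. This makes `Pₙᴰ` a commutative monoid in which the `ε_{i,j}` satisfy
(PD1)–(PD5), since each relation holds as soon as both sides lie below the same
`Dₙ`-partitions. The induced homomorphism `F` is onto, as every `Dₙ`-partition is the product
of the `ε_{i,j}` over its related pairs `i, j`.

For injectivity, (PD1) and (PD2) make the presented monoid a semilattice. Fix `z` in it and
join `x, y` whenever `z` absorbs the generator on `{x, y}`. By (PD4) and (PD3) this graph is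
invariant under negation and closed under completing triangles, so adding the pairs
`{x, -x}` joined through a third point yields a signed partition `R_z`, and (PD5) shows that
`R_z` has at most one zero block. Hence `F y ≤ R_z` exactly when `z * y = z`; so `F x = F y`
gives `y * x = y` and `x * y = x`, that is `x = y`.
-/

namespace PM

variable {n : ℕ}

theorem neg_ne_self (x : PM n) : x.neg ≠ x := fun h => x.2.1 (by
  have : -x.1 = x.1 := congrArg Subtype.val h
  omega)

theorem ne_neg_comm {x y : PM n} (h : y ≠ x.neg) : x ≠ y.neg :=
  fun e => h (by rw [e, neg_neg])

theorem abs_eq_or (x : PM n) : x.abs = x ∨ x.abs = x.neg := by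
  rcases le_or_gt 0 x.1 with h | h
  · exact .inl (Subtype.ext (abs_of_nonneg h))
  · exact .inr (Subtype.ext (abs_of_neg h))

theorem abs_pos (x : PM n) : 0 < x.abs.1 := _root_.abs_pos.2 x.2.1

instance : Finite (PM n) :=
  Set.Finite.to_subtype ((Set.finite_Icc (-(n : ℤ)) n).subset fun _ hk => abs_le.1 hk.2)

end PM

section Setoid

variable {α : Type*}

theorem muSet_apply {X : Set α} {x y : α} : muSet X x y ↔ x = y ∨ x ∈ X ∧ y ∈ X := by
  let K : Setoid α :=
    { r := fun a b => a = b ∨ a ∈ X ∧ b ∈ X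
      iseqv := ⟨fun _ => .inl rfl, fun h => h.elim (fun e => .inl e.symm) (fun h => .inr h.symm),
        fun hab hbc => by
          rcases hab with rfl | ⟨ha, hb⟩
          · exact hbc
          · rcases hbc with rfl | ⟨_, hc⟩
            exacts [.inr ⟨ha, hb⟩, .inr ⟨ha, hc⟩]⟩ }
  refine ⟨fun h => Setoid.eqvGen_le (s := K) (fun _ _ h => .inr h) h, ?_⟩
  rintro (rfl | h)
  exacts [(muSet X).refl' x, .rel _ _ h]

theorem muSet_le_iff {X : Set α} {r : Setoid α} :
    muSet X ≤ r ↔ ∀ x ∈ X, ∀ y ∈ X, r x y :=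
  ⟨fun h _ hx _ hy => h (muSet_apply.2 (.inr ⟨hx, hy⟩)),
    fun h => Setoid.eqvGen_le fun x y hxy => h x hxy.1 y hxy.2⟩

theorem mu_le_iff {x y : α} {r : Setoid α} : mu x y ≤ r ↔ r x y := by
  refine muSet_le_iff.trans ⟨fun h => h x (by simp) y (by simp), ?_⟩
  rintro h a (rfl | rfl) b (rfl | rfl)
  exacts [r.refl' _, h, r.symm' h, r.refl' _]

theorem muSet_sup_muSet_apply {A B : Set α} (hAB : Disjoint A B) {x y : α} :
    (muSet A ⊔ muSet B) x y ↔ x = y ∨ x ∈ A ∧ y ∈ A ∨ x ∈ B ∧ y ∈ B := by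
  let K : Setoid α :=
    { r := fun a b => a = b ∨ a ∈ A ∧ b ∈ A ∨ a ∈ B ∧ b ∈ B
      iseqv := ⟨fun _ => .inl rfl, fun h => by rcases h with rfl | h | h <;> tauto,
        fun hab hbc => by
          have := Set.disjoint_left.1 hAB
          rcases hab with rfl | ⟨ha, hb⟩ | ⟨ha, hb⟩ <;>
            rcases hbc with rfl | ⟨hb', hc⟩ | ⟨hb', hc⟩ <;> tauto⟩ }
  have hle : muSet A ⊔ muSet B ≤ K :=
    sup_le (muSet_le_iff.2 fun _ ha _ hb => .inr (.inl ⟨ha, hb⟩))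
      (muSet_le_iff.2 fun _ ha _ hb => .inr (.inr ⟨ha, hb⟩))
  refine ⟨fun h => hle h, ?_⟩
  rintro (rfl | ⟨hx, hy⟩ | ⟨hx, hy⟩)
  · exact Setoid.refl' _ x
  · exact le_sup_left (b := muSet B) (muSet_apply.2 (.inr ⟨hx, hy⟩))
  · exact le_sup_right (a := muSet A) (muSet_apply.2 (.inr ⟨hx, hy⟩))

/-- Otherwise `{x}` would be a union of classes of `I` and of `J`, hence of `I ⊔ J`. -/
theorem Setoid.rel_or_rel_of_sup_class_subset {I J : Setoid α} {x y : α} (hxy : (I ⊔ J) x y)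
    (hcls : ∀ z, (I ⊔ J) x z → z = x ∨ z = y) : I x y ∨ J x y := by
  by_contra! h
  have hker : ∀ K : Setoid α, K ≤ I ⊔ J → ¬ K x y → K ≤ Setoid.ker (· = x) := by
    intro K hK hKxy a b hab
    rw [Setoid.ker_def, eq_iff_iff]
    constructor
    · rintro rfl
      exact (hcls b (hK hab)).resolve_right (by rintro rfl; exact hKxy hab)
    · rintro rfl
      exact (hcls a (hK (K.symm' hab))).resolve_right (by rintro rfl; exact hKxy (K.symm' hab))
  have := Setoid.ker_def.1 (sup_le (hker I le_sup_left h.1) (hker J le_sup_right h.2) hxy)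
  have hyx : y = x := by simpa using this
  exact h.1 (hyx ▸ I.refl' x)

end Setoid

theorem Set.two_lt_ncard_iff_exists_ne {α : Type*} {K : Set α} (hK : K.Finite) {a b : α}
    (ha : a ∈ K) (hb : b ∈ K) (hab : a ≠ b) :
    2 < K.ncard ↔ ∃ c ∈ K, c ≠ a ∧ c ≠ b := by
  refine ⟨fun h => ?_, fun ⟨c, hc, hca, hcb⟩ =>
    (Set.two_lt_ncard_iff hK).2 ⟨a, b, c, ha, hb, hc, hab, hca.symm, hcb.symm⟩⟩
  by_contra! hne
  have hsub : K ⊆ {a, b} := fun c hc => by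
    by_cases hca : c = a
    · exact .inl hca
    · exact .inr (hne c hc hca)
  have := Set.ncard_le_ncard hsub
  rw [Set.ncard_pair hab] at this
  omega

theorem exists_sorted_four {α : Type*} [LinearOrder α] {p q r s : α} (hpq : p < q) (hrs : r < s)
    (hpr : p ≠ r) (hps : p ≠ s) (hqr : q ≠ r) (hqs : q ≠ s) :
    ∃ a b c d, a < b ∧ b < c ∧ c < d ∧ ({p, q, r, s} : Set α) = {a, b, c, d} := by
  rcases hpr.lt_or_gt with hpr | hrp
  · rcases hqr.lt_or_gt with hqr | hrq
    · exact ⟨p, q, r, s, hpq, hqr, hrs, rfl⟩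
    rcases hqs.lt_or_gt with hqs | hsq
    · exact ⟨p, r, q, s, hpr, hrq, hqs, by rw [Set.insert_comm q r]⟩
    · exact ⟨p, r, s, q, hpr, hrs, hsq, by rw [Set.insert_comm q r, Set.pair_comm q s]⟩
  rcases hps.lt_or_gt with hps | hsp
  · rcases hqs.lt_or_gt with hqs | hsq
    · exact ⟨r, p, q, s, hrp, hpq, hqs, by rw [Set.insert_comm q r, Set.insert_comm p r]⟩
    · exact ⟨r, p, s, q, hrp, hps, hsq, by
        rw [Set.insert_comm q r, Set.insert_comm p r, Set.pair_comm q s]⟩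
  · exact ⟨r, s, p, q, hrs, hsp, hpq, by
      rw [Set.insert_comm q r, Set.insert_comm p r, Set.pair_comm q s, Set.insert_comm p s]⟩

theorem mul_mul_eq_left_iff {M : Type*} [CommMonoid M] {z a b : M} (ha : IsIdempotentElem a)
    (hb : IsIdempotentElem b) : z * (a * b) = z ↔ z * a = z ∧ z * b = z := by
  refine ⟨fun h => ⟨?_, ?_⟩, fun ⟨h₁, h₂⟩ => by rw [← mul_assoc, h₁, h₂]⟩
  · calc z * a = z * (a * b) * a := by rw [h]
      _ = z * (a * b) := by rw [mul_assoc, mul_right_comm, ha.eq]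
      _ = z := h
  · calc z * b = z * (a * b) * b := by rw [h]
      _ = z * (a * b) := by rw [mul_assoc, mul_assoc, hb.eq]
      _ = z := h

section SignedClosure

variable {α : Type*} (σ : α → α) (E : α → α → Prop)

def SignedClosure (a b : α) : Prop :=
  a = b ∨ E a b ∨ (b = σ a ∧ ∃ c, E a c ∧ E c b)

variable {σ E}

theorem SignedClosure.of_edge_edge
    (htri : ∀ ⦃a b c⦄, E a b → E b c → c ≠ a → c ≠ σ a → E a c) {a b c : α}
    (hab : E a b) (hbc : E b c) : SignedClosure σ E a c := by
  by_cases hca : c = a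
  · exact .inl hca.symm
  by_cases hcσ : c = σ a
  · exact .inr (.inr ⟨hcσ, b, hab, hbc⟩)
  exact .inr (.inl (htri hab hbc hca hcσ))

theorem equivalence_signedClosure (hσ : Function.Involutive σ)
    (hsymm : ∀ ⦃a b⦄, E a b → E b a) (hneg : ∀ ⦃a b⦄, E a b → E (σ a) (σ b))
    (htri : ∀ ⦃a b c⦄, E a b → E b c → c ≠ a → c ≠ σ a → E a c) :
    Equivalence (SignedClosure σ E) := by
  refine ⟨fun _ => .inl rfl, ?_, ?_⟩
  · rintro a b (rfl | h | ⟨rfl, c, hac, hcb⟩)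
    exacts [.inl rfl, .inr (.inl (hsymm h)),
      .inr (.inr ⟨(hσ a).symm, c, hsymm hcb, hsymm hac⟩)]
  intro a b c hab hbc
  rcases hab with rfl | hab | ⟨rfl, d, had, hdb⟩
  · exact hbc
  all_goals rcases hbc with rfl | hbc | ⟨rfl, d', hbd', hd'c⟩
  · exact .inr (.inl hab)
  · exact SignedClosure.of_edge_edge htri hab hbc
  · -- the path `a, b, d', σ b`
    by_cases hd'a : d' = a
    · exact .inr (.inl (hd'a ▸ hd'c))
    by_cases hd'σ : d' = σ a
    · have := hneg (hsymm (hd'σ ▸ hbd'))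
      rw [hσ] at this
      exact .inr (.inl this)
    exact SignedClosure.of_edge_edge htri (htri hab hbd' hd'a hd'σ) hd'c
  · exact .inr (.inr ⟨rfl, d, had, hdb⟩)
  · -- the path `a, d, σ a, c`
    by_cases hcd : c = d
    · exact .inr (.inl (hcd ▸ had))
    by_cases hcσd : c = σ d
    · have := hneg hdb
      rw [hσ, ← hcσd] at this
      exact .inr (.inl (hsymm this))
    exact SignedClosure.of_edge_edge htri had (htri hdb hbc hcd hcσd)
  · rw [hσ]
    exact .inl rfl

theorem SignedClosure.map (hneg : ∀ ⦃a b⦄, E a b → E (σ a) (σ b))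
    {a b : α} : SignedClosure σ E a b → SignedClosure σ E (σ a) (σ b)
  | .inl h => .inl (congrArg σ h)
  | .inr (.inl h) => .inr (.inl (hneg h))
  | .inr (.inr ⟨h, c, hac, hcb⟩) => .inr (.inr ⟨congrArg σ h, σ c, hneg hac, hneg hcb⟩)

end SignedClosure

section DPartitions

variable {n : ℕ} {I J : Setoid (PM n)} {x y : PM n}

def InZeroBlock (I : Setoid (PM n)) (x : PM n) : Prop := I x x.neg

def AtMostOneZeroBlock (I : Setoid (PM n)) : Prop :=
  ∀ x y, InZeroBlock I x → InZeroBlock I y → I x y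

theorem isSigned_of_rel_neg (h : ∀ x y, I x y → I x.neg y.neg) : IsSigned I :=
  fun x y => ⟨h x y, fun hxy => by simpa using h _ _ hxy⟩

theorem IsSigned.rel_neg (hI : IsSigned I) (h : I x y) : I x.neg y.neg := (hI x y).1 h

theorem IsSigned.inZeroBlock_neg (hI : IsSigned I) (hx : InZeroBlock I x) :
    InZeroBlock I x.neg :=
  hI.rel_neg hx

theorem IsSigned.inZeroBlock_of_rel (hI : IsSigned I) (hx : InZeroBlock I x) (hxy : I x y) :
    InZeroBlock I y :=
  I.trans' (I.symm' hxy) (I.trans' hx (hI.rel_neg hxy))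

theorem isSigned_bot : IsSigned (⊥ : Setoid (PM n)) :=
  isSigned_of_rel_neg fun _ _ h => congrArg PM.neg h

theorem IsSigned.sup (hI : IsSigned I) (hJ : IsSigned J) : IsSigned (I ⊔ J) := by
  refine isSigned_of_rel_neg fun x y h => ?_
  have : I ⊔ J ≤ Setoid.comap PM.neg (I ⊔ J) :=
    sup_le (fun _ _ h => le_sup_left (b := J) (hI.rel_neg h))
      (fun _ _ h => le_sup_right (a := I) (hJ.rel_neg h))
  exact this h

theorem not_inZeroBlock_bot (x : PM n) : ¬ InZeroBlock ⊥ x :=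
  fun h => x.neg_ne_self (Eq.symm h)

theorem IsSigned.isZeroBlock_iff (hI : IsSigned I) {K : Set (PM n)} :
    IsZeroBlock I K ↔ ∃ x, InZeroBlock I x ∧ K = {z | I z x} := by
  constructor
  · rintro ⟨⟨x, rfl⟩, hK⟩
    refine ⟨x, I.symm' ?_, rfl⟩
    have : x.neg ∈ negSet {z | I z x} := ⟨x, I.refl' x, rfl⟩
    rwa [hK] at this
  · rintro ⟨x, hx, rfl⟩
    refine ⟨⟨x, rfl⟩, Set.ext fun z => ⟨?_, fun hz => ⟨z.neg, ?_, PM.neg_neg z⟩⟩⟩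
    · rintro ⟨w, hw, rfl⟩
      exact I.trans' (hI.rel_neg hw) (I.symm' hx)
    · exact I.trans' (hI.rel_neg hz) (I.symm' hx)

theorem isDPart_iff : IsDPart I ↔ IsSigned I ∧ AtMostOneZeroBlock I ∧
    ∀ x, InZeroBlock I x → ∃ z, I z x ∧ z ≠ x ∧ z ≠ x.neg := by
  have two_lt_iff : ∀ x, InZeroBlock I x →
      (2 < {z | I z x}.ncard ↔ ∃ z, I z x ∧ z ≠ x ∧ z ≠ x.neg) := fun x hx =>
    Set.two_lt_ncard_iff_exists_ne (Set.toFinite _) (I.refl' x) (I.symm' hx) x.neg_ne_self.symm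
  constructor
  · rintro ⟨⟨hS, hsub⟩, hcard⟩
    refine ⟨hS, fun x y hx hy => ?_, fun x hx => (two_lt_iff x hx).1 (hcard _
      (hS.isZeroBlock_iff.2 ⟨x, hx, rfl⟩))⟩
    have : {z | I z x} = {z | I z y} :=
      hsub (hS.isZeroBlock_iff.2 ⟨x, hx, rfl⟩) (hS.isZeroBlock_iff.2 ⟨y, hy, rfl⟩)
    show x ∈ {z | I z y}
    rw [← this]
    exact I.refl' x
  · rintro ⟨hS, hZ, hbig⟩
    refine ⟨⟨hS, fun K₁ hK₁ K₂ hK₂ => ?_⟩, fun K hK => ?_⟩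
    · obtain ⟨x, hx, rfl⟩ := hS.isZeroBlock_iff.1 hK₁
      obtain ⟨y, hy, rfl⟩ := hS.isZeroBlock_iff.1 hK₂
      exact Set.ext fun z => ⟨fun h => I.trans' h (hZ x y hx hy),
        fun h => I.trans' h (hZ y x hy hx)⟩
    · obtain ⟨x, hx, rfl⟩ := hS.isZeroBlock_iff.1 hK
      exact (two_lt_iff x hx).2 (hbig x hx)

theorem IsDPart.isSigned (hI : IsDPart I) : IsSigned I := hI.1.1

theorem IsDPart.atMostOneZeroBlock (hI : IsDPart I) : AtMostOneZeroBlock I :=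
  (isDPart_iff.1 hI).2.1

theorem isDPart_bot : IsDPart (⊥ : Setoid (PM n)) :=
  isDPart_iff.2 ⟨isSigned_bot, fun x _ hx => absurd hx (not_inZeroBlock_bot x),
    fun x hx => absurd hx (not_inZeroBlock_bot x)⟩

theorem AtMostOneZeroBlock.rel_neg_and_rel_iff (hZ : AtMostOneZeroBlock I) (hI : IsSigned I) :
    I x.neg y ∧ I x y ↔ InZeroBlock I x ∧ InZeroBlock I y := by
  refine ⟨fun ⟨h₁, h₂⟩ => ?_, fun ⟨hx, hy⟩ =>
    ⟨hZ _ y (hI.inZeroBlock_neg hx) hy, hZ x y hx hy⟩⟩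
  have hx : InZeroBlock I x := I.trans' h₂ (I.symm' h₁)
  exact ⟨hx, hI.inZeroBlock_of_rel hx h₂⟩

def mergeZeroBlocks (I : Setoid (PM n)) : Setoid (PM n) :=
  Relation.EqvGen.setoid fun x y => I x y ∨ InZeroBlock I x ∧ InZeroBlock I y

theorem IsSigned.mergeZeroBlocks_apply (hI : IsSigned I) :
    mergeZeroBlocks I x y ↔ I x y ∨ InZeroBlock I x ∧ InZeroBlock I y := by
  let K : Setoid (PM n) :=
    { r := fun x y => I x y ∨ InZeroBlock I x ∧ InZeroBlock I y
      iseqv := ⟨fun x => .inl (I.refl' x),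
        fun h => h.elim (fun h => .inl (I.symm' h)) (fun h => .inr h.symm),
        fun {a b c} hab hbc => by
          rcases hab with hab | ⟨ha, hb⟩ <;> rcases hbc with hbc | ⟨hb', hc⟩
          · exact .inl (I.trans' hab hbc)
          · exact .inr ⟨hI.inZeroBlock_of_rel hb' (I.symm' hab), hc⟩
          · exact .inr ⟨ha, hI.inZeroBlock_of_rel hb hbc⟩
          · exact .inr ⟨ha, hc⟩⟩ }
  exact ⟨fun h => Setoid.eqvGen_le (s := K) (fun _ _ h => h) h, fun h => .rel _ _ h⟩

theorem le_mergeZeroBlocks (I : Setoid (PM n)) : I ≤ mergeZeroBlocks I :=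
  fun _ _ h => .rel _ _ (.inl h)

theorem mergeZeroBlocks_le {K : Setoid (PM n)} (hK : AtMostOneZeroBlock K) (h : I ≤ K) :
    mergeZeroBlocks I ≤ K :=
  Setoid.eqvGen_le fun x y hxy =>
    hxy.elim (fun hxy => h hxy) fun ⟨hx, hy⟩ => hK x y (h hx) (h hy)

theorem IsSigned.inZeroBlock_mergeZeroBlocks_iff (hI : IsSigned I) :
    InZeroBlock (mergeZeroBlocks I) x ↔ InZeroBlock I x := by
  rw [InZeroBlock, hI.mergeZeroBlocks_apply]
  exact ⟨fun h => h.elim id And.left, .inl⟩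

theorem isSigned_mergeZeroBlocks (hI : IsSigned I) : IsSigned (mergeZeroBlocks I) := by
  refine isSigned_of_rel_neg fun x y h => ?_
  rw [hI.mergeZeroBlocks_apply] at h ⊢
  exact h.imp hI.rel_neg fun ⟨hx, hy⟩ => ⟨hI.inZeroBlock_neg hx, hI.inZeroBlock_neg hy⟩

theorem IsSigned.atMostOneZeroBlock_mergeZeroBlocks (hI : IsSigned I) :
    AtMostOneZeroBlock (mergeZeroBlocks I) := fun _ _ hx hy =>
  .rel _ _ (.inr ⟨hI.inZeroBlock_mergeZeroBlocks_iff.1 hx,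
    hI.inZeroBlock_mergeZeroBlocks_iff.1 hy⟩)

/-- A two-element zero block `{x, -x}` of `I ⊔ J` would be a block of `I` or of `J`. -/
theorem isDPart_mergeZeroBlocks_sup (hI : IsDPart I) (hJ : IsDPart J) :
    IsDPart (mergeZeroBlocks (I ⊔ J)) := by
  have hS : IsSigned (I ⊔ J) := hI.isSigned.sup hJ.isSigned
  refine isDPart_iff.2
    ⟨isSigned_mergeZeroBlocks hS, hS.atMostOneZeroBlock_mergeZeroBlocks, fun x hx => ?_⟩
  rw [hS.inZeroBlock_mergeZeroBlocks_iff] at hx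
  by_contra! hsmall
  have hcls : ∀ z, (I ⊔ J) x z → z = x ∨ z = x.neg := fun z hz =>
    or_iff_not_imp_left.2 (hsmall z (le_mergeZeroBlocks _ ((I ⊔ J).symm' hz)))
  have hbig : ∀ K : Setoid (PM n), IsDPart K → K ≤ I ⊔ J → ¬ InZeroBlock K x := by
    intro K hK hle hKx
    obtain ⟨z, hz, hzx, hzn⟩ := (isDPart_iff.1 hK).2.2 x hKx
    rcases hcls z ((I ⊔ J).symm' (hle hz)) with h | h <;> contradiction
  rcases Setoid.rel_or_rel_of_sup_class_subset hx hcls with h | h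
  exacts [hbig I hI le_sup_left h, hbig J hJ le_sup_right h]

theorem isLeast_mergeZeroBlocks_sup (hI : IsDPart I) (hJ : IsDPart J) :
    IsLeast {K | IsDPart K ∧ I ≤ K ∧ J ≤ K} (mergeZeroBlocks (I ⊔ J)) :=
  ⟨⟨isDPart_mergeZeroBlocks_sup hI hJ, le_sup_left.trans (le_mergeZeroBlocks _),
      le_sup_right.trans (le_mergeZeroBlocks _)⟩,
    fun _ ⟨hK, hIK, hJK⟩ => mergeZeroBlocks_le hK.atMostOneZeroBlock (sup_le hIK hJK)⟩

end DPartitions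

/-- `Pₙᴰ` with the product `·_D`. -/
def DPart (n : ℕ) := {I : Setoid (PM n) // IsDPart I}

namespace DPart

variable {n : ℕ}

instance : PartialOrder (DPart n) := Subtype.partialOrder _

instance : One (DPart n) := ⟨⟨⊥, isDPart_bot⟩⟩

instance : Mul (DPart n) :=
  ⟨fun I J => ⟨mergeZeroBlocks (I.1 ⊔ J.1), isDPart_mergeZeroBlocks_sup I.2 J.2⟩⟩

theorem one_le (I : DPart n) : 1 ≤ I := bot_le (a := I.1)

theorem mul_val_le_iff {I J : DPart n} {K : Setoid (PM n)} (hK : AtMostOneZeroBlock K) :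
    (I * J).1 ≤ K ↔ I.1 ≤ K ∧ J.1 ≤ K :=
  ⟨fun h => ⟨(le_sup_left.trans (le_mergeZeroBlocks _)).trans h,
      (le_sup_right.trans (le_mergeZeroBlocks _)).trans h⟩,
    fun ⟨hI, hJ⟩ => mergeZeroBlocks_le hK (sup_le hI hJ)⟩

theorem mul_le_iff {I J K : DPart n} : I * J ≤ K ↔ I ≤ K ∧ J ≤ K :=
  mul_val_le_iff K.2.atMostOneZeroBlock

theorem ext_of_le_iff {I J : DPart n} (h : ∀ K : DPart n, I ≤ K ↔ J ≤ K) : I = J :=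
  le_antisymm ((h J).2 le_rfl) ((h I).1 le_rfl)

instance : CommMonoid (DPart n) where
  mul_assoc _ _ _ := ext_of_le_iff fun _ => by simp only [mul_le_iff, and_assoc]
  one_mul I := ext_of_le_iff fun K => by simp only [mul_le_iff, (one_le K), true_and]
  mul_one I := ext_of_le_iff fun K => by simp only [mul_le_iff, (one_le K), and_true]
  mul_comm _ _ := ext_of_le_iff fun _ => by simp only [mul_le_iff, and_comm]

end DPart

section Eps

variable {n : ℕ} {i j : PM n}

theorem eps_le_iff {K : Setoid (PM n)} (hK : IsSigned K) : eps i j ≤ K ↔ K i j := by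
  rw [eps, sup_le_iff, mu_le_iff, mu_le_iff]
  exact ⟨And.right, fun h => ⟨hK.rel_neg (K.symm' h), h⟩⟩

theorem isSigned_eps (i j : PM n) : IsSigned (eps i j) := by
  refine isSigned_of_rel_neg fun x y h => ?_
  have hij : eps i j i j := le_sup_right (a := mu j.neg i.neg) (mu_le_iff.1 le_rfl)
  have hji : eps i j j.neg i.neg := le_sup_left (b := mu i j) (mu_le_iff.1 le_rfl)
  have : eps i j ≤ Setoid.comap PM.neg (eps i j) := by
    refine sup_le (mu_le_iff.2 ?_) (mu_le_iff.2 ?_) <;> simp only [Setoid.comap_rel, PM.neg_neg]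
    exacts [(eps i j).symm' hij, (eps i j).symm' hji]
  exact this h

end Eps

section Generators

variable {n : ℕ}

theorem eps_apply {i j : PM n} (hji : j ≠ i.neg) {x y : PM n} :
    eps i j x y ↔ x = y ∨
      x ∈ ({j.neg, i.neg} : Set (PM n)) ∧ y ∈ ({j.neg, i.neg} : Set (PM n)) ∨
      x ∈ ({i, j} : Set (PM n)) ∧ y ∈ ({i, j} : Set (PM n)) := by
  have hv : j.1 ≠ -i.1 := fun h => hji (Subtype.ext h)
  have := i.2.1
  have := j.2.1
  refine muSet_sup_muSet_apply (Set.disjoint_left.2 fun x hx hx' => ?_)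
  simp only [Set.mem_insert_iff, Set.mem_singleton_iff, Subtype.ext_iff, PM.neg] at hx hx'
  omega

theorem not_inZeroBlock_eps {i j : PM n} (hji : j ≠ i.neg) (x : PM n) :
    ¬ InZeroBlock (eps i j) x := by
  have hv : j.1 ≠ -i.1 := fun h => hji (Subtype.ext h)
  have := i.2.1
  have := j.2.1
  have := x.2.1
  rw [InZeroBlock, eps_apply hji]
  simp only [Set.mem_insert_iff, Set.mem_singleton_iff, Subtype.ext_iff, PM.neg]
  omega

theorem isDPart_eps {i j : PM n} (hji : j ≠ i.neg) : IsDPart (eps i j) :=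
  isDPart_iff.2 ⟨isSigned_eps i j, fun x _ hx => absurd hx (not_inZeroBlock_eps hji x),
    fun x hx => absurd hx (not_inZeroBlock_eps hji x)⟩

def DPart.ofGen (g : DGen n) : DPart n := ⟨eps g.1.1 g.1.2, isDPart_eps g.2.2⟩

theorem DPart.ofGen_le_iff (g : DGen n) (P : DPart n) :
    DPart.ofGen g ≤ P ↔ P.1 g.1.1 g.1.2 :=
  eps_le_iff P.2.isSigned

/-- The relations hold in `DPart n` because both sides lie below the same `Dₙ`-partitions. -/
theorem lift_ofGen_eq_of_dRel {a b : FreeMonoid (DGen n)} (h : DRel n a b) :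
    FreeMonoid.lift DPart.ofGen a = FreeMonoid.lift DPart.ofGen b := by
  refine DPart.ext_of_le_iff fun P => ?_
  have hS := P.2.isSigned
  have hZ := P.2.atMostOneZeroBlock
  cases h with
  | PD1 a => simp only [map_mul, FreeMonoid.lift_eval_of, DPart.mul_le_iff, and_self]
  | PD2 a b => simp only [map_mul, FreeMonoid.lift_eval_of, DPart.mul_le_iff, and_comm]
  | PD3a i j k =>
    simp only [map_mul, FreeMonoid.lift_eval_of, DPart.mul_le_iff, DPart.ofGen_le_iff]
    exact ⟨fun ⟨h₁, h₂⟩ => ⟨h₁, P.1.trans' h₁ h₂⟩,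
      fun ⟨h₁, h₂⟩ => ⟨h₁, P.1.trans' (P.1.symm' h₁) h₂⟩⟩
  | PD3b i j k =>
    simp only [map_mul, FreeMonoid.lift_eval_of, DPart.mul_le_iff, DPart.ofGen_le_iff]
    exact ⟨fun ⟨h₁, h₂⟩ => ⟨P.1.trans' h₁ h₂, h₂⟩,
      fun ⟨h₁, h₂⟩ => ⟨P.1.trans' h₁ (P.1.symm' h₂), h₂⟩⟩
  | PD4 i j =>
    simp only [FreeMonoid.lift_eval_of, DPart.ofGen_le_iff]
    exact ⟨fun h => hS.rel_neg (P.1.symm' h), fun h => P.1.symm' (by simpa using hS.rel_neg h)⟩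
  | PD5 i j r s a b c d _ _ _ _ _ _ _ _ _ _ _ _ _ hset =>
    simp only [map_mul, FreeMonoid.lift_eval_of, DPart.mul_le_iff, DPart.ofGen_le_iff, and_assoc]
    have key := fun x y : PM n => hZ.rel_neg_and_rel_iff hS (x := x) (y := y)
    have hL : P.1 i.neg j ∧ P.1 i j ∧ P.1 r.neg s ∧ P.1 r s ↔
        ∀ w ∈ ({i, j, r, s} : Set (PM n)), InZeroBlock P.1 w := by
      simp only [Set.forall_mem_insert, Set.mem_singleton_iff, forall_eq]
      rw [← and_assoc, key, key, and_assoc]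
    have hR : P.1 a.neg b ∧ P.1 a b ∧ P.1 b c ∧ P.1 c d ↔
        ∀ w ∈ ({a, b, c, d} : Set (PM n)), InZeroBlock P.1 w := by
      simp only [Set.forall_mem_insert, Set.mem_singleton_iff, forall_eq]
      rw [← and_assoc, key]
      refine ⟨fun ⟨⟨ha, hb⟩, hbc, hcd⟩ => ?_, fun ⟨ha, hb, hc, hd⟩ =>
        ⟨⟨ha, hb⟩, hZ b c hb hc, hZ c d hc hd⟩⟩
      have hc := hS.inZeroBlock_of_rel hb hbc
      exact ⟨ha, hb, hc, hS.inZeroBlock_of_rel hc hcd⟩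
    rw [hL, hR, hset]

def toDPart : PresentedMonoid (DRel n) →* DPart n :=
  PresentedMonoid.lift DPart.ofGen fun _ _ h => lift_ofGen_eq_of_dRel h

end Generators

section PresentedMonoid

variable {n : ℕ}

abbrev egen (g : DGen n) : PresentedMonoid (DRel n) := PresentedMonoid.of (DRel n) g

theorem mk_of_eq_egen (g : DGen n) : PresentedMonoid.mk (DRel n) (FreeMonoid.of g) = egen g :=
  rfl

instance : CommMonoid (PresentedMonoid (DRel n)) :=
  { (inferInstance : Monoid (PresentedMonoid (DRel n))) with
    mul_comm := fun x y => by
      have h := Submonoid.closure_le_centralizer_centralizer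
        (Set.range (PresentedMonoid.of (DRel n)))
      rw [PresentedMonoid.closure_range_of] at h
      refine Set.centralizer_centralizer_comm_of_comm ?_ x (h (Submonoid.mem_top x)) y
        (h (Submonoid.mem_top y))
      rintro _ ⟨a, rfl⟩ _ ⟨b, rfl⟩
      exact PresentedMonoid.mk_eq_mk_of_rel (.PD2 a b) }

theorem isIdempotentElem_dRel (x : PresentedMonoid (DRel n)) : IsIdempotentElem x := by
  induction x using Submonoid.induction_of_closure_eq_top_left
    (PresentedMonoid.closure_range_of _) with
  | one => exact .one
  | mul_left x hx y ih =>
    obtain ⟨a, rfl⟩ := hx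
    exact IsIdempotentElem.mul (PresentedMonoid.mk_eq_mk_of_rel (.PD1 a)) ih

/-- By (PD3), `z` absorbs all of `e_{i,j}, e_{j,k}, e_{i,k}` as soon as it absorbs two of them. -/
theorem mul_egen_triangle {i j k : PM n} (hij : i < j) (hjk : j < k) (hji : j ≠ i.neg)
    (hkj : k ≠ j.neg) (hki : k ≠ i.neg) (z : PresentedMonoid (DRel n)) :
    (z * egen ⟨(i, j), hij, hji⟩ = z ∧ z * egen ⟨(j, k), hjk, hkj⟩ = z ↔
      z * egen ⟨(i, j), hij, hji⟩ = z ∧ z * egen ⟨(i, k), hij.trans hjk, hki⟩ = z) ∧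
    (z * egen ⟨(i, j), hij, hji⟩ = z ∧ z * egen ⟨(j, k), hjk, hkj⟩ = z ↔
      z * egen ⟨(i, k), hij.trans hjk, hki⟩ = z ∧ z * egen ⟨(j, k), hjk, hkj⟩ = z) := by
  have hAC : egen ⟨(i, j), hij, hji⟩ * egen ⟨(j, k), hjk, hkj⟩ =
      egen ⟨(i, j), hij, hji⟩ * egen ⟨(i, k), hij.trans hjk, hki⟩ :=
    PresentedMonoid.mk_eq_mk_of_rel (.PD3a i j k hij hjk hji hkj hki)
  have hCB : egen ⟨(i, j), hij, hji⟩ * egen ⟨(j, k), hjk, hkj⟩ =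
      egen ⟨(i, k), hij.trans hjk, hki⟩ * egen ⟨(j, k), hjk, hkj⟩ :=
    PresentedMonoid.mk_eq_mk_of_rel (.PD3b i j k hij hjk hji hkj hki)
  simp only [← mul_mul_eq_left_iff (isIdempotentElem_dRel _) (isIdempotentElem_dRel _), ← hAC,
    ← hCB, and_self]

end PresentedMonoid

section Absorption

variable {n : ℕ} {z : PresentedMonoid (DRel n)} {x y w : PM n}

def AbsorbsPair (z : PresentedMonoid (DRel n)) (x y : PM n) : Prop :=
  ∃ g : DGen n, z * egen g = z ∧ (g.1 = (x, y) ∨ g.1 = (y, x))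

theorem absorbsPair_of_mul_egen_eq (g : DGen n) (h : z * egen g = z) :
    AbsorbsPair z g.1.1 g.1.2 :=
  ⟨g, h, .inl rfl⟩

theorem AbsorbsPair.symm (h : AbsorbsPair z x y) : AbsorbsPair z y x :=
  let ⟨g, hg, hxy⟩ := h
  ⟨g, hg, hxy.symm⟩

theorem AbsorbsPair.ne (h : AbsorbsPair z x y) : y ≠ x ∧ y ≠ x.neg := by
  obtain ⟨⟨g, hlt, hneg⟩, -, h | h⟩ := h <;> simp only at h <;> subst h
  exacts [⟨hlt.ne', hneg⟩, ⟨hlt.ne, PM.ne_neg_comm hneg⟩]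

theorem AbsorbsPair.neg (h : AbsorbsPair z x y) : AbsorbsPair z x.neg y.neg := by
  obtain ⟨g, hg, hxy⟩ := h
  refine ⟨⟨(g.1.2.neg, g.1.1.neg), PM.neg_lt_neg g.2.1, PM.neg_ne_neg_neg g.2.2⟩, ?_, ?_⟩
  · have hdual : egen ⟨(g.1.2.neg, g.1.1.neg), PM.neg_lt_neg g.2.1, PM.neg_ne_neg_neg g.2.2⟩ =
        egen g := (PresentedMonoid.mk_eq_mk_of_rel (DRel.PD4 g.1.1 g.1.2 g.2.1 g.2.2)).symm
    rwa [hdual]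
  · rcases hxy with h | h <;> simp only [h] <;> tauto

theorem AbsorbsPair.mul_egen_eq (h : AbsorbsPair z x y) (hxy : x < y) (hyx : y ≠ x.neg) :
    z * egen ⟨(x, y), hxy, hyx⟩ = z := by
  obtain ⟨g, hg, h | h⟩ := h
  · rwa [show g = ⟨(x, y), hxy, hyx⟩ from Subtype.ext h] at hg
  · have hyx : g.1.1 < g.1.2 := g.2.1
    rw [h] at hyx
    exact absurd hyx hxy.asymm

theorem AbsorbsPair.trans_of_ne (hxy : AbsorbsPair z x y) (hyw : AbsorbsPair z y w)
    (hwx : w ≠ x) (hwn : w ≠ x.neg) : AbsorbsPair z x w := by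
  wlog hxw : x < w generalizing x w
  · exact (this hyw.symm hxy.symm hwx.symm (PM.ne_neg_comm hwn)
      ((lt_or_gt_of_ne hwx).resolve_right hxw)).symm
  obtain ⟨hyx, hyn⟩ := hxy.ne
  obtain ⟨hwy, hwyn⟩ := hyw.ne
  rcases lt_or_gt_of_ne hyx with hyx | hxy'
  · have := (mul_egen_triangle hyx hxw (PM.ne_neg_comm hyn) hwn hwyn z).1.2
      ⟨hxy.symm.mul_egen_eq hyx (PM.ne_neg_comm hyn), hyw.mul_egen_eq (hyx.trans hxw) hwyn⟩
    exact absorbsPair_of_mul_egen_eq _ this.2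
  rcases lt_or_gt_of_ne hwy with hwy | hyw'
  · have := (mul_egen_triangle hxw hwy hwn (PM.ne_neg_comm hwyn) hyn z).2.2
      ⟨hxy.mul_egen_eq hxy' hyn, hyw.symm.mul_egen_eq hwy (PM.ne_neg_comm hwyn)⟩
    exact absorbsPair_of_mul_egen_eq _ this.1
  · have := (mul_egen_triangle hxy' hyw' hyn hwyn hwn z).1.1
      ⟨hxy.mul_egen_eq hxy' hyn, hyw.mul_egen_eq hyw' hwyn⟩
    exact absorbsPair_of_mul_egen_eq _ this.2

def absorbSetoid (z : PresentedMonoid (DRel n)) : Setoid (PM n) where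
  r := SignedClosure PM.neg (AbsorbsPair z)
  iseqv := equivalence_signedClosure PM.neg_neg (fun _ _ h => h.symm) (fun _ _ h => h.neg)
    fun _ _ _ h₁ h₂ => h₁.trans_of_ne h₂

theorem isSigned_absorbSetoid (z : PresentedMonoid (DRel n)) : IsSigned (absorbSetoid z) :=
  isSigned_of_rel_neg fun _ _ => SignedClosure.map fun _ _ h => h.neg

theorem absorbSetoid_apply_dGen (g : DGen n) : absorbSetoid z g.1.1 g.1.2 ↔ z * egen g = z := by
  refine ⟨?_, fun h => .inr (.inl (absorbsPair_of_mul_egen_eq g h))⟩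
  rintro (h | h | ⟨h, -⟩)
  exacts [absurd h g.2.1.ne, h.mul_egen_eq g.2.1 g.2.2, absurd h g.2.2]

theorem eps_le_absorbSetoid_iff (g : DGen n) :
    eps g.1.1 g.1.2 ≤ absorbSetoid z ↔ z * egen g = z :=
  (eps_le_iff (isSigned_absorbSetoid z)).trans (absorbSetoid_apply_dGen g)

theorem exists_pos_of_inZeroBlock_absorbSetoid {u : PM n}
    (hu : InZeroBlock (absorbSetoid z) u) :
    ∃ p q : PM n, 0 < p.1 ∧ p < q ∧ AbsorbsPair z p.neg q ∧ AbsorbsPair z p q ∧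
      absorbSetoid z u p ∧ absorbSetoid z u q := by
  obtain ⟨c, huc, hcu⟩ : ∃ c, AbsorbsPair z u c ∧ AbsorbsPair z c u.neg := by
    rcases hu with h | h | ⟨-, h⟩
    exacts [absurd h.symm u.neg_ne_self, absurd rfl h.ne.2, h]
  have hcross : ∀ a, (a = u ∨ a = u.neg) → ∀ b, (b = c ∨ b = c.neg) →
      AbsorbsPair z a b := by
    rintro a (rfl | rfl) b (rfl | rfl)
    · exact huc
    · simpa using hcu.neg.symm
    · exact hcu.symm
    · exact huc.neg
  have hp : u.abs = u ∨ u.abs = u.neg := u.abs_eq_or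
  have hq : c.abs = c ∨ c.abs = c.neg := c.abs_eq_or
  have hpq := hcross _ hp _ hq
  have hnpq := hcross u.abs.neg (by rcases hp with h | h <;> simp [h]) _ hq
  have hpnq := hcross _ hp c.abs.neg (by rcases hq with h | h <;> simp [h])
  have hup : absorbSetoid z u u.abs := by
    rcases hp with h | h <;> rw [h]
    exact hu
  have huq : absorbSetoid z u c.abs := .inr (.inl (hcross u (.inl rfl) _ hq))
  rcases lt_or_gt_of_ne hpq.ne.1 with hqp | hpq'
  · exact ⟨c.abs, u.abs, c.abs_pos, hqp, hpnq.symm, hpq.symm, huq, hup⟩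
  · exact ⟨u.abs, c.abs, u.abs_pos, hpq', hnpq, hpq, hup, huq⟩

/-- (PD5) turns the two zero blocks spanned by `±i, ±j` and by `±r, ±s` into a single one. -/
theorem absorbSetoid_rel_of_pd5 {i j r s : PM n} (hi : 0 < i.1) (hr : 0 < r.1) (hij : i < j)
    (hrs : r < s) (hnij : AbsorbsPair z i.neg j) (hpij : AbsorbsPair z i j)
    (hnrs : AbsorbsPair z r.neg s) (hprs : AbsorbsPair z r s)
    (hir : i ≠ r) (his : i ≠ s) (hjr : j ≠ r) (hjs : j ≠ s) : absorbSetoid z i r := by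
  have hj : 0 < j.1 := hi.trans hij
  have hs : 0 < s.1 := hr.trans hrs
  obtain ⟨a, b, c, d, hab, hbc, hcd, hset⟩ := exists_sorted_four hij hrs hir his hjr hjs
  have hpos : ∀ w ∈ ({a, b, c, d} : Set (PM n)), 0 < w.1 := by
    rw [← hset]
    simp only [Set.forall_mem_insert, Set.mem_singleton_iff, forall_eq]
    exact ⟨hi, hj, hr, hs⟩
  simp only [Set.forall_mem_insert, Set.mem_singleton_iff, forall_eq] at hpos
  obtain ⟨ha, hb, hc, hd⟩ := hpos
  have h5 := PresentedMonoid.mk_eq_mk_of_rel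
    (DRel.PD5 i j r s a b c d hi hj hr hs ha hb hc hd hij hrs hab hbc hcd hset)
  simp only [map_mul, mk_of_eq_egen] at h5
  have transfer : ∀ {L R : PresentedMonoid (DRel n)}, L = R → z * L = z → z * R = z :=
    fun h hL => h ▸ hL
  have hRHS := transfer h5 (by
    simp only [mul_mul_eq_left_iff (isIdempotentElem_dRel _) (isIdempotentElem_dRel _)]
    exact ⟨⟨⟨hnij.mul_egen_eq (PM.neg_lt_pos hi hj) (by simpa using hij.ne'),
      hpij.mul_egen_eq hij (PM.pos_ne_neg hi hj)⟩,
      hnrs.mul_egen_eq (PM.neg_lt_pos hr hs) (by simpa using hrs.ne')⟩,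
      hprs.mul_egen_eq hrs (PM.pos_ne_neg hr hs)⟩)
  simp only [mul_mul_eq_left_iff (isIdempotentElem_dRel _) (isIdempotentElem_dRel _)] at hRHS
  obtain ⟨⟨⟨-, hab'⟩, hbc'⟩, hcd'⟩ := hRHS
  have hR : ∀ w ∈ ({a, b, c, d} : Set (PM n)), absorbSetoid z a w := by
    have hRab := (absorbSetoid_apply_dGen _).2 hab'
    have hRac := (absorbSetoid z).trans' hRab ((absorbSetoid_apply_dGen _).2 hbc')
    have hRad := (absorbSetoid z).trans' hRac ((absorbSetoid_apply_dGen _).2 hcd')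
    simp only [Set.forall_mem_insert, Set.mem_singleton_iff, forall_eq]
    exact ⟨(absorbSetoid z).refl' a, hRab, hRac, hRad⟩
  rw [← hset] at hR
  exact (absorbSetoid z).trans' ((absorbSetoid z).symm' (hR i (by simp))) (hR r (by simp))

theorem atMostOneZeroBlock_absorbSetoid (z : PresentedMonoid (DRel n)) :
    AtMostOneZeroBlock (absorbSetoid z) := by
  intro u v hu hv
  obtain ⟨i, j, hi, hij, hnij, hpij, hui, huj⟩ := exists_pos_of_inZeroBlock_absorbSetoid hu
  obtain ⟨r, s, hr, hrs, hnrs, hprs, hvr, hvs⟩ := exists_pos_of_inZeroBlock_absorbSetoid hv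
  let R := absorbSetoid z
  have hRij : R i j := R.trans' (R.symm' hui) huj
  have hRrs : R r s := R.trans' (R.symm' hvr) hvs
  suffices R i r from R.trans' hui (R.trans' this (R.symm' hvr))
  rcases eq_or_ne i r with rfl | hir
  · exact R.refl' i
  rcases eq_or_ne i s with rfl | his
  · exact R.symm' hRrs
  rcases eq_or_ne j r with rfl | hjr
  · exact hRij
  rcases eq_or_ne j s with rfl | hjs
  · exact R.trans' hRij (R.symm' hRrs)
  exact absorbSetoid_rel_of_pd5 hi hr hij hrs hnij hpij hnrs hprs hir his hjr hjs

theorem toDPart_le_absorbSetoid_iff (z y : PresentedMonoid (DRel n)) :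
    (toDPart y).1 ≤ absorbSetoid z ↔ z * y = z := by
  induction y using Submonoid.induction_of_closure_eq_top_left
    (PresentedMonoid.closure_range_of _) with
  | one => exact ⟨fun _ => mul_one z, fun _ => bot_le (a := absorbSetoid z)⟩
  | mul_left x hx y ih =>
    obtain ⟨g, rfl⟩ := hx
    rw [map_mul, mul_mul_eq_left_iff (isIdempotentElem_dRel _) (isIdempotentElem_dRel _), ← ih,
      ← eps_le_absorbSetoid_iff]
    exact DPart.mul_val_le_iff (atMostOneZeroBlock_absorbSetoid z)

theorem toDPart_injective : Function.Injective (toDPart (n := n)) := by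
  have hle : ∀ x y : PresentedMonoid (DRel n), toDPart x = toDPart y → y * x = y :=
    fun x y h => (toDPart_le_absorbSetoid_iff y x).1
      (h ▸ (toDPart_le_absorbSetoid_iff y y).2 (isIdempotentElem_dRel y))
  intro x y h
  calc x = x * y := (hle y x h.symm).symm
    _ = y * x := mul_comm x y
    _ = y := hle x y h

end Absorption

section Surjectivity

variable {n : ℕ}

noncomputable def relGens (I : Setoid (PM n)) : Finset (DGen n) :=
  (Set.toFinite {g : DGen n | I g.1.1 g.1.2}).toFinset

theorem mem_relGens {I : Setoid (PM n)} {g : DGen n} : g ∈ relGens I ↔ I g.1.1 g.1.2 :=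
  Set.Finite.mem_toFinset _

theorem Setoid.rel_iff_of_val_eq (r : Setoid (PM n)) {g : DGen n} {x y : PM n}
    (hg : g.1 = (x, y) ∨ g.1 = (y, x)) : r g.1.1 g.1.2 ↔ r x y := by
  rcases hg with h | h <;> rw [h]
  exact ⟨r.symm', r.symm'⟩

theorem exists_dGen_val_eq {x y : PM n} (hyx : y ≠ x) (hyn : y ≠ x.neg) :
    ∃ g : DGen n, g.1 = (x, y) ∨ g.1 = (y, x) := by
  rcases lt_or_gt_of_ne hyx with h | h
  · exact ⟨⟨(y, x), h, PM.ne_neg_comm hyn⟩, .inr rfl⟩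
  · exact ⟨⟨(x, y), h, hyn⟩, .inl rfl⟩

theorem prod_ofGen_le_iff (S : Finset (DGen n)) (P : DPart n) :
    ∏ g ∈ S, DPart.ofGen g ≤ P ↔ ∀ g ∈ S, P.1 g.1.1 g.1.2 := by
  classical
  induction S using Finset.induction_on with
  | empty => simpa using DPart.one_le P
  | insert g S hg ih => rw [Finset.prod_insert hg, DPart.mul_le_iff, DPart.ofGen_le_iff, ih,
      Finset.forall_mem_insert]

theorem prod_ofGen_relGens {I : Setoid (PM n)} (hI : IsDPart I) :
    ∏ g ∈ relGens I, DPart.ofGen g = ⟨I, hI⟩ := by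
  set Q := ∏ g ∈ relGens I, DPart.ofGen g
  refine le_antisymm ((prod_ofGen_le_iff _ ⟨I, hI⟩).2 fun g hg => mem_relGens.1 hg) ?_
  have hpair : ∀ x y, I x y → y ≠ x → y ≠ x.neg → Q.1 x y := by
    intro x y hxy hyx hyn
    obtain ⟨g, hg⟩ := exists_dGen_val_eq hyx hyn
    exact (Q.1.rel_iff_of_val_eq hg).1 ((prod_ofGen_le_iff _ Q).1 le_rfl g
      (mem_relGens.2 ((I.rel_iff_of_val_eq hg).2 hxy)))
  intro x y hxy
  rcases eq_or_ne y x with rfl | hyx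
  · exact Q.1.refl' y
  rcases eq_or_ne y x.neg with rfl | hyn
  · obtain ⟨w, hw, hwx, hwn⟩ := (isDPart_iff.1 hI).2.2 x hxy
    exact Q.1.trans' (hpair x w (I.symm' hw) hwx hwn)
      (hpair w x.neg (I.trans' hw hxy) hwn.symm fun h => hwx (PM.neg_injective h).symm)
  · exact hpair x y hxy hyx hyn

end Surjectivity

theorem presentedMonoid_bijection_PnD_general (n : ℕ) :
    (∀ I J : Setoid (PM n), IsDPart I → IsDPart J →
        ∃ K₀ : Setoid (PM n), IsLeast {K | IsDPart K ∧ I ≤ K ∧ J ≤ K} K₀) ∧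
    ∃ F : PresentedMonoid (DRel n) → Setoid (PM n),
      Function.Injective F ∧
      Set.range F = {I | IsDPart I} ∧
      F 1 = ⊥ ∧
      (∀ a : DGen n, F (PresentedMonoid.of (DRel n) a) = eps a.1.1 a.1.2) ∧
      ∀ x y : PresentedMonoid (DRel n),
        IsLeast {K | IsDPart K ∧ F x ≤ K ∧ F y ≤ K} (F (x * y)) := by
  refine ⟨fun I J hI hJ => ⟨_, isLeast_mergeZeroBlocks_sup hI hJ⟩, fun x => (toDPart x).1,
    fun x y h => toDPart_injective (Subtype.ext h), ?_, congrArg Subtype.val (map_one toDPart),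
    fun _ => rfl, fun x y => ?_⟩
  · ext I
    refine ⟨fun ⟨x, hx⟩ => hx ▸ (toDPart x).2,
      fun hI => ⟨∏ g ∈ relGens I, egen g, ?_⟩⟩
    exact congrArg Subtype.val
      ((map_prod toDPart egen (relGens I)).trans (prod_ofGen_relGens hI))
  · show IsLeast _ (toDPart (x * y)).1
    rw [map_mul]
    exact isLeast_mergeZeroBlocks_sup (toDPart x).2 (toDPart y).2

/-- For `Dₙ`-partitions `I, J`, the set of common `Dₙ`-coarsenings
has a least element, defining the product `·_D`.  With this product, there is a
bijection `F` from the monoid presented by the generators `e_{i,j}` subject to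
(PD1)–(PD5) onto the set `Pₙᴰ` of `Dₙ`-partitions, mapping the identity to `⊥`, each
generator `e_{i,j}` to `ε_{i,j}`, and products to `·_D` products: `F(x·y)` is the least
`Dₙ`-partition coarser than both `F(x)` and `F(y)`. -/
theorem presentedMonoid_bijection_PnD (n : ℕ) (hn : 2 ≤ n) :
    (∀ I J : Setoid (PM n), IsDPart I → IsDPart J →
        ∃ K₀ : Setoid (PM n), IsLeast {K | IsDPart K ∧ I ≤ K ∧ J ≤ K} K₀) ∧
    ∃ F : PresentedMonoid (DRel n) → Setoid (PM n),
      Function.Injective F ∧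
      Set.range F = {I | IsDPart I} ∧
      F 1 = ⊥ ∧
      (∀ a : DGen n, F (PresentedMonoid.of (DRel n) a) = eps a.1.1 a.1.2) ∧
      ∀ x y : PresentedMonoid (DRel n),
        IsLeast {K | IsDPart K ∧ F x ≤ K ∧ F y ≤ K} (F (x * y)) :=
  presentedMonoid_bijection_PnD_general n
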